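/- Let T ≥ 1, N ≥ 1, m ≥ 1, ε > 0, and δ ∈ (0,1). Let X be a fixed T × N real matrix and let μ be a probability measure on m × N real matrices such that μ{Ω : ∥X Xᵀ − X Ωᵀ Ω Xᵀ∥_F ≤ ε·∥X∥_F²} ≥ 1 − δ. Then, with Σ = X Xᵀ, Σ̂(Ω) = X Ωᵀ Ω Xᵀ, and R defined via r_τ[M] = (1/N)·(1/(T−τ))·∑_{t=1}^{T−τ} M_{t,t+τ}, one has μ{Ω : ∥R[Σ̂(Ω)] − R[Σ]∥_1 ≤ (√(1 + log T)/N)·ε·∥X∥_F² and ∥R[Σ̂(Ω)] − R[Σ]∥_∞ ≤ (1/N)·ε·∥X∥_F²} ≥ 1 − δ. -/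

import Mathlib

/-!
The sketch error enters the autocorrelations linearly, so on the event
`‖XXᵀ − XΩᵀΩXᵀ‖_F ≤ ε‖X‖_F²` it suffices to bound `R[E]` for a matrix `E` with `‖E‖_F ≤ ε‖X‖_F²`.
Now `r_τ[E]` is `1/(N(T−τ))` times the sum of the `T − τ` entries of the `τ`-th superdiagonal
of `E`, so Cauchy–Schwarz gives `|r_τ[E]| ≤ N⁻¹ (T−τ)^(-1/2) q_τ^(1/2)`, where `q_τ` is the sum of
squares along that superdiagonal. Distinct superdiagonals are disjoint, hence `∑ q_τ ≤ ‖E‖_F²`.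
This gives the ℓ∞ bound at once, and a second Cauchy–Schwarz over `τ` together with
`∑_τ 1/(T−τ) = H_T ≤ 1 + log T` gives the ℓ1 bound.
-/

open Finset Matrix MeasureTheory

/-- Frobenius norm of a real matrix. -/
noncomputable def frob {α β : Type*} [Fintype α] [Fintype β] (M : Matrix α β ℝ) : ℝ :=
  Real.sqrt (∑ i, ∑ j, (M i j) ^ 2)

/-- Lag-`τ` autocorrelation functional
`r_τ[M] = (1/N)·(1/(T−τ))·∑_{t=1}^{T−τ} M_{t,t+τ}` (0-based indexing). -/
noncomputable def acf (N : ℕ) {T : ℕ} (M : Matrix (Fin T) (Fin T) ℝ) (τ : ℕ) : ℝ :=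
  (N : ℝ)⁻¹ * (((T - τ : ℕ) : ℝ))⁻¹ *
    ∑ t : Fin T, if h : (t : ℕ) + τ < T then M t ⟨(t : ℕ) + τ, h⟩ else 0

lemma abs_inv_mul_le_sqrt_inv_mul_sqrt {n q S : ℝ} (hn : 0 ≤ n) (hS : S ^ 2 ≤ n * q) :
    |n⁻¹ * S| ≤ √n⁻¹ * √q := by
  rw [← Real.sqrt_mul (inv_nonneg.2 hn)]
  refine Real.abs_le_sqrt ?_
  calc (n⁻¹ * S) ^ 2 = n⁻¹ * n⁻¹ * S ^ 2 := by ring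
    _ ≤ n⁻¹ * n⁻¹ * (n * q) := by gcongr
    _ = n⁻¹ * q := by
      have hcancel := mul_self_mul_inv n⁻¹
      rw [inv_inv] at hcancel
      rw [← mul_assoc, hcancel]

lemma sum_range_inv_sub_le_one_add_log (T : ℕ) :
    ∑ τ ∈ range T, ((T - τ : ℕ) : ℝ)⁻¹ ≤ 1 + Real.log T := by
  have hharmonic : ∑ τ ∈ range T, ((T - τ : ℕ) : ℝ)⁻¹ = harmonic T := by
    rw [harmonic, ← sum_range_reflect]
    push_cast
    refine sum_congr rfl fun τ hτ => ?_
    rw [show T - (T - 1 - τ) = τ + 1 by have := mem_range.1 hτ; omega]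
    push_cast
    rfl
  exact hharmonic ▸ harmonic_le_one_add_log T

namespace Matrix

variable {T : ℕ} {α : Type*}

noncomputable def lagDiag [Zero α] (M : Matrix (Fin T) (Fin T) α) (τ : ℕ) (t : Fin T) : α :=
  if h : (t : ℕ) + τ < T then M t ⟨t + τ, h⟩ else 0

lemma lagDiag_map {β : Type*} [Zero α] [Zero β] (M : Matrix (Fin T) (Fin T) α) {f : α → β}
    (hf : f 0 = 0) (τ : ℕ) (t : Fin T) : lagDiag (M.map f) τ t = f (lagDiag M τ t) := by
  unfold lagDiag
  split_ifs <;> simp [hf]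

lemma lagDiag_sub [SubtractionMonoid α] (A B : Matrix (Fin T) (Fin T) α) (τ : ℕ) (t : Fin T) :
    lagDiag (A - B) τ t = lagDiag A τ t - lagDiag B τ t := by
  unfold lagDiag
  split_ifs <;> simp

lemma sum_range_lagDiag [AddCommMonoid α] (M : Matrix (Fin T) (Fin T) α) (t : Fin T) :
    ∑ τ ∈ range T, lagDiag M τ t = ∑ j with t ≤ j, M t j := by
  refine (sum_of_injOn (fun j : Fin T => (j - t : ℕ)) ?_ ?_ ?_ ?_).symm
  · intro i hi j hj hij
    simp only [coe_filter, Set.mem_ofPred_eq, mem_univ, true_and, Fin.le_def] at hi hj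
    exact Fin.ext (by simp only at hij; omega)
  · intro j _
    simp only [coe_range, Set.mem_Iio]
    omega
  · intro τ _ hτ
    rw [lagDiag, dif_neg]
    intro h
    refine hτ ⟨⟨t + τ, h⟩, ?_, ?_⟩
    · simp only [coe_filter, mem_univ, true_and, Set.mem_ofPred_eq, Fin.le_def]
      omega
    · simp
  · intro j hj
    simp only [mem_filter, mem_univ, true_and, Fin.le_def] at hj
    rw [lagDiag, dif_pos (by omega)]
    exact congrArg (M t) (Fin.ext (by simp only; omega))

lemma card_filter_add_lt (τ : ℕ) : #{t : Fin T | (t : ℕ) + τ < T} = T - τ := by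
  rw [← min_eq_right (Nat.sub_le T τ), ← Fin.card_filter_val_lt]
  congr 1
  ext t
  simp only [mem_filter, mem_univ, true_and]
  omega

lemma sum_range_sum_lagDiag_le [AddCommMonoid α] [PartialOrder α]
    [IsOrderedAddMonoid α] {M : Matrix (Fin T) (Fin T) α} (hM : ∀ i j, 0 ≤ M i j) :
    ∑ τ ∈ range T, ∑ t, lagDiag M τ t ≤ ∑ i, ∑ j, M i j := by
  rw [sum_comm]
  refine sum_le_sum fun t _ => ?_
  rw [sum_range_lagDiag]
  exact sum_le_sum_of_subset_of_nonneg (filter_subset _ _) fun j _ _ => hM t j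

lemma sum_range_sum_lagDiag_sq_le (M : Matrix (Fin T) (Fin T) ℝ) :
    ∑ τ ∈ range T, ∑ t, lagDiag M τ t ^ 2 ≤ ∑ i, ∑ j, M i j ^ 2 := by
  have hsq : ∀ τ t, lagDiag M τ t ^ 2 = lagDiag (M.map (· ^ 2)) τ t := fun τ t =>
    (lagDiag_map M (zero_pow two_ne_zero) τ t).symm
  simp only [hsq]
  exact sum_range_sum_lagDiag_le fun i j => sq_nonneg (M i j)

lemma sq_sum_lagDiag_le (M : Matrix (Fin T) (Fin T) ℝ) (τ : ℕ) :
    (∑ t, lagDiag M τ t) ^ 2 ≤ (T - τ : ℕ) * ∑ t, lagDiag M τ t ^ 2 := by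
  have hsupport :
      ∑ t ∈ univ.filter fun t : Fin T => (t : ℕ) + τ < T, lagDiag M τ t = ∑ t, lagDiag M τ t :=
    sum_filter_of_ne fun t _ ht => by_contra fun h => ht (dif_neg h)
  rw [← hsupport, ← card_filter_add_lt]
  refine sq_sum_le_card_mul_sum_sq.trans ?_
  gcongr
  exact subset_univ _

end Matrix

section acf

variable (N : ℕ) {T : ℕ}

lemma acf_eq_inv_mul_sum_lagDiag (M : Matrix (Fin T) (Fin T) ℝ) (τ : ℕ) :
    acf N M τ = (N : ℝ)⁻¹ * (((T - τ : ℕ) : ℝ)⁻¹ * ∑ t, lagDiag M τ t) :=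
  mul_assoc _ _ _

lemma acf_sub (A B : Matrix (Fin T) (Fin T) ℝ) (τ : ℕ) :
    acf N (A - B) τ = acf N A τ - acf N B τ := by
  simp only [acf_eq_inv_mul_sum_lagDiag, lagDiag_sub, sum_sub_distrib, mul_sub]

lemma abs_acf_le (M : Matrix (Fin T) (Fin T) ℝ) (τ : ℕ) :
    |acf N M τ| ≤ (N : ℝ)⁻¹ * (√((T - τ : ℕ) : ℝ)⁻¹ * √(∑ t, lagDiag M τ t ^ 2)) := by
  rw [acf_eq_inv_mul_sum_lagDiag, abs_mul, abs_of_nonneg (by positivity)]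
  gcongr
  exact abs_inv_mul_le_sqrt_inv_mul_sqrt (Nat.cast_nonneg _) (sq_sum_lagDiag_le M τ)

lemma abs_acf_le_inv_mul_frob (M : Matrix (Fin T) (Fin T) ℝ) {τ : ℕ} (hτ : τ < T) :
    |acf N M τ| ≤ (N : ℝ)⁻¹ * frob M := by
  have henergy : ∑ t, lagDiag M τ t ^ 2 ≤ ∑ i, ∑ j, M i j ^ 2 :=
    (single_le_sum (fun τ _ => by positivity) (mem_range.2 hτ)).trans
      (sum_range_sum_lagDiag_sq_le M)
  calc |acf N M τ| ≤ (N : ℝ)⁻¹ * (1 * frob M) := by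
        refine (abs_acf_le N M τ).trans ?_
        gcongr
        · exact Real.sqrt_le_one.2 (Nat.cast_inv_le_one _)
        · exact Real.sqrt_le_sqrt henergy
    _ = (N : ℝ)⁻¹ * frob M := by rw [one_mul]

lemma sum_abs_acf_le (M : Matrix (Fin T) (Fin T) ℝ) :
    ∑ τ ∈ range T, |acf N M τ| ≤ √(1 + Real.log T) / N * frob M := by
  calc ∑ τ ∈ range T, |acf N M τ|
      ≤ (N : ℝ)⁻¹ * ∑ τ ∈ range T, √((T - τ : ℕ) : ℝ)⁻¹ * √(∑ t, lagDiag M τ t ^ 2) := by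
        rw [mul_sum]
        exact sum_le_sum fun τ _ => abs_acf_le N M τ
    _ ≤ (N : ℝ)⁻¹ * (√(∑ τ ∈ range T, ((T - τ : ℕ) : ℝ)⁻¹) *
          √(∑ τ ∈ range T, ∑ t, lagDiag M τ t ^ 2)) := by
        gcongr
        exact Real.sum_sqrt_mul_sqrt_le _ (fun _ => by positivity) (fun _ => by positivity)
    _ ≤ (N : ℝ)⁻¹ * (√(1 + Real.log T) * frob M) := by
        gcongr
        · exact sum_range_inv_sub_le_one_add_log T
        · exact Real.sqrt_le_sqrt (sum_range_sum_lagDiag_sq_le M)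
    _ = √(1 + Real.log T) / N * frob M := by ring

end acf

theorem acf_sketch_error_bound_prob_general (T N m : ℕ) (ε δ : ℝ)
    (X : Matrix (Fin T) (Fin N) ℝ)
    [MeasurableSpace (Matrix (Fin m) (Fin N) ℝ)]
    (μ : Measure (Matrix (Fin m) (Fin N) ℝ))
    (h : ENNReal.ofReal (1 - δ) ≤
      μ {Om | frob (X * Xᵀ - X * Omᵀ * Om * Xᵀ) ≤ ε * frob X ^ 2}) :
    ENNReal.ofReal (1 - δ) ≤
      μ {Om |
        (∑ τ ∈ Finset.range T, |acf N (X * Omᵀ * Om * Xᵀ) τ - acf N (X * Xᵀ) τ| ≤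
          Real.sqrt (1 + Real.log T) / N * (ε * frob X ^ 2)) ∧
        ∀ τ : ℕ, τ < T →
          |acf N (X * Omᵀ * Om * Xᵀ) τ - acf N (X * Xᵀ) τ| ≤ (N : ℝ)⁻¹ * (ε * frob X ^ 2)} := by
  refine h.trans (measure_mono fun Om hOm => ?_)
  have hdiff : ∀ τ, |acf N (X * Omᵀ * Om * Xᵀ) τ - acf N (X * Xᵀ) τ| =
      |acf N (X * Xᵀ - X * Omᵀ * Om * Xᵀ) τ| := fun τ => by
    rw [acf_sub, abs_sub_comm]
  simp only [Set.mem_ofPred_eq, hdiff] at hOm ⊢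
  exact ⟨(sum_abs_acf_le N _).trans (by gcongr),
    fun τ hτ => (abs_acf_le_inv_mul_frob N _ hτ).trans (by gcongr)⟩

/-- if with probability at least `1−δ` (over the random sketch `Ω ∼ μ`) one has
`∥X Xᵀ − X Ωᵀ Ω Xᵀ∥_F ≤ ε ∥X∥_F²`, then with probability at least `1−δ` the
autocorrelation errors satisfy the ℓ1 bound `√(1+log T)/N · ε ∥X∥_F²` and the
ℓ∞ bound `(1/N) · ε ∥X∥_F²`. -/
theorem acf_sketch_error_bound_prob (T N m : ℕ) (hT : 1 ≤ T) (hN : 1 ≤ N) (hm : 1 ≤ m)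
    (ε δ : ℝ) (hε : 0 < ε) (hδ0 : 0 < δ) (hδ1 : δ < 1)
    (X : Matrix (Fin T) (Fin N) ℝ)
    [MeasurableSpace (Matrix (Fin m) (Fin N) ℝ)]
    (μ : Measure (Matrix (Fin m) (Fin N) ℝ)) [IsProbabilityMeasure μ]
    (h : ENNReal.ofReal (1 - δ) ≤
      μ {Om | frob (X * Xᵀ - X * Omᵀ * Om * Xᵀ) ≤ ε * frob X ^ 2}) :
    ENNReal.ofReal (1 - δ) ≤
      μ {Om |
        (∑ τ ∈ Finset.range T, |acf N (X * Omᵀ * Om * Xᵀ) τ - acf N (X * Xᵀ) τ| ≤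
          Real.sqrt (1 + Real.log T) / N * (ε * frob X ^ 2)) ∧
        ∀ τ : ℕ, τ < T →
          |acf N (X * Omᵀ * Om * Xᵀ) τ - acf N (X * Xᵀ) τ| ≤ (N : ℝ)⁻¹ * (ε * frob X ^ 2)} :=
  acf_sketch_error_bound_prob_general T N m ε δ X μ h
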